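/- Let (φ, ψ, θ, P) be a classical solution of the vertically-damped thermodiffusive Bresse–Timoshenko system with Dirichlet boundary conditions. Then for every t > 0 the energy satisfies E′(t) = −δ ∫₀ᴸ θ_x² dx − h ∫₀ᴸ P_x² dx − μ ∫₀ᴸ φ_t² dx − (μ ρ2/κ) ∫₀ᴸ φ_tt² dx ≤ 0; in particular E is nonincreasing. -/

import Mathlib

open Real intervalIntegral

/-- Spatial partial derivative of a function of `(x, t)`. -/
noncomputable def pdx (f : ℝ → ℝ → ℝ) : ℝ → ℝ → ℝ := fun x t => deriv (fun y => f y t) x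

/-- Temporal partial derivative of a function of `(x, t)`. -/
noncomputable def pdt (f : ℝ → ℝ → ℝ) : ℝ → ℝ → ℝ := fun x t => deriv (fun s => f x s) t

/-- Classical solution of the vertically-damped thermodiffusive
Bresse–Timoshenko system with Dirichlet boundary conditions. -/
def IsSolutionV (L ρ1 ρ2 κ α ξ1 ξ2 τ0 δ r h μ d : ℝ) (φ ψ θ P : ℝ → ℝ → ℝ) : Prop :=
  ContDiff ℝ (⊤ : ℕ∞) (Function.uncurry φ) ∧ ContDiff ℝ (⊤ : ℕ∞) (Function.uncurry ψ) ∧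
  ContDiff ℝ (⊤ : ℕ∞) (Function.uncurry θ) ∧ ContDiff ℝ (⊤ : ℕ∞) (Function.uncurry P) ∧
  (∀ x ∈ Set.Ioo (0:ℝ) L, ∀ t > (0:ℝ),
    ρ1 * pdt (pdt φ) x t - κ * pdx (fun y s => pdx φ y s + ψ y s) x t + μ * pdt φ x t = 0 ∧
    -(ρ2 * pdx (pdt (pdt φ)) x t) - α * pdx (pdx ψ) x t + κ * (pdx φ x t + ψ x t)
        - ξ1 * pdx θ x t - ξ2 * pdx P x t = 0 ∧
    τ0 * pdt θ x t + d * pdt P x t - δ * pdx (pdx θ) x t - ξ1 * pdx (pdt ψ) x t = 0 ∧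
    d * pdt θ x t + r * pdt P x t - h * pdx (pdx P) x t - ξ2 * pdx (pdt ψ) x t = 0) ∧
  (∀ t ≥ (0:ℝ),
    φ 0 t = 0 ∧ φ L t = 0 ∧ ψ 0 t = 0 ∧ ψ L t = 0 ∧
    θ 0 t = 0 ∧ θ L t = 0 ∧ P 0 t = 0 ∧ P L t = 0)

/-- The energy functional for the vertically-damped system. -/
noncomputable def energyV (L ρ1 ρ2 κ α τ0 r d : ℝ) (φ ψ θ P : ℝ → ℝ → ℝ) (t : ℝ) : ℝ :=
  (1/2) * ∫ x in (0:ℝ)..L,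
    (ρ1 * (pdt φ x t) ^ 2 + α * (pdx ψ x t) ^ 2 + κ * (pdx φ x t + ψ x t) ^ 2
      + (ρ1 * ρ2 / κ) * (pdt (pdt φ) x t) ^ 2 + ρ2 * (pdx (pdt φ) x t) ^ 2
      + τ0 * (θ x t) ^ 2 + r * (P x t) ^ 2 + 2 * d * (θ x t) * (P x t))

section BTVhelpers

open Function MeasureTheory Set Metric

variable {f : ℝ → ℝ → ℝ}

lemma BTV.hasDerivAt_pdx (hf : ContDiff ℝ (⊤ : ℕ∞) (uncurry f)) (x t : ℝ) :
    HasDerivAt (fun y => f y t) (pdx f x t) x := by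
  have h : DifferentiableAt ℝ (fun y => f y t) x :=
    (hf.differentiable (by simp) (x, t)).comp (f := fun y : ℝ => (y, t)) x
      (DifferentiableAt.prodMk differentiableAt_id (differentiableAt_const t))
  exact h.hasDerivAt

lemma BTV.hasDerivAt_pdt (hf : ContDiff ℝ (⊤ : ℕ∞) (uncurry f)) (x t : ℝ) :
    HasDerivAt (fun s => f x s) (pdt f x t) t := by
  have h : DifferentiableAt ℝ (fun s => f x s) t :=
    (hf.differentiable (by simp) (x, t)).comp t
      (DifferentiableAt.prodMk (differentiableAt_const x) differentiableAt_id)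
  exact h.hasDerivAt

lemma BTV.pdx_eq_fderiv (hf : ContDiff ℝ (⊤ : ℕ∞) (uncurry f)) (x t : ℝ) :
    pdx f x t = fderiv ℝ (uncurry f) (x, t) (1, 0) := by
  have h1 : HasDerivAt (fun y : ℝ => (y, t)) ((1 : ℝ), (0 : ℝ)) x :=
    HasDerivAt.prodMk (hasDerivAt_id x) (hasDerivAt_const x t)
  exact ((hf.differentiable (by simp) (x, t)).hasFDerivAt.comp_hasDerivAt x h1).deriv

lemma BTV.pdt_eq_fderiv (hf : ContDiff ℝ (⊤ : ℕ∞) (uncurry f)) (x t : ℝ) :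
    pdt f x t = fderiv ℝ (uncurry f) (x, t) (0, 1) := by
  have h1 : HasDerivAt (fun s : ℝ => (x, s)) ((0 : ℝ), (1 : ℝ)) t :=
    HasDerivAt.prodMk (hasDerivAt_const t x) (hasDerivAt_id t)
  exact ((hf.differentiable (by simp) (x, t)).hasFDerivAt.comp_hasDerivAt t h1).deriv

lemma BTV.contDiff_pdx (hf : ContDiff ℝ (⊤ : ℕ∞) (uncurry f)) :
    ContDiff ℝ (⊤ : ℕ∞) (uncurry (pdx f)) := by
  have h1 : ContDiff ℝ (⊤ : ℕ∞) (fun p : ℝ × ℝ => fderiv ℝ (uncurry f) p (1, 0)) :=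
    (hf.fderiv_right (by simp)).clm_apply contDiff_const
  convert h1 using 1
  funext p
  exact BTV.pdx_eq_fderiv hf p.1 p.2

lemma BTV.contDiff_pdt (hf : ContDiff ℝ (⊤ : ℕ∞) (uncurry f)) :
    ContDiff ℝ (⊤ : ℕ∞) (uncurry (pdt f)) := by
  have h1 : ContDiff ℝ (⊤ : ℕ∞) (fun p : ℝ × ℝ => fderiv ℝ (uncurry f) p (0, 1)) :=
    (hf.fderiv_right (by simp)).clm_apply contDiff_const
  convert h1 using 1
  funext p
  exact BTV.pdt_eq_fderiv hf p.1 p.2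

lemma BTV.cont_slice (hf : ContDiff ℝ (⊤ : ℕ∞) (uncurry f)) (t : ℝ) :
    Continuous (fun x => f x t) :=
  hf.continuous.comp (continuous_id.prodMk continuous_const)

lemma BTV.pdt_pdx_comm (hf : ContDiff ℝ (⊤ : ℕ∞) (uncurry f)) :
    pdt (pdx f) = pdx (pdt f) := by
  funext x t
  have hdF : Differentiable ℝ (uncurry f) := hf.differentiable (by simp)
  have hdF' : Differentiable ℝ (fderiv ℝ (uncurry f)) :=
    (hf.fderiv_right (m := (⊤ : ℕ∞)) (by simp)).differentiable (by simp)
  have key : ∀ v w : ℝ × ℝ,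
      fderiv ℝ (fun p => fderiv ℝ (uncurry f) p v) (x, t) w
        = fderiv ℝ (fderiv ℝ (uncurry f)) (x, t) w v := by
    intro v w
    rw [fderiv_clm_apply (hdF' (x, t)) (differentiableAt_const v)]
    simp
  have hsymm := second_derivative_symmetric (f := uncurry f)
    (f' := fderiv ℝ (uncurry f)) (f'' := fderiv ℝ (fderiv ℝ (uncurry f)) (x, t))
    (fun y => (hdF y).hasFDerivAt) ((hdF' (x, t)).hasFDerivAt) (1, 0) (0, 1)
  have e1 : pdt (pdx f) x t = fderiv ℝ (fderiv ℝ (uncurry f)) (x, t) (0, 1) (1, 0) := by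
    rw [BTV.pdt_eq_fderiv (BTV.contDiff_pdx hf) x t]
    have h2 : uncurry (pdx f) = fun p => fderiv ℝ (uncurry f) p (1, 0) := by
      funext p; exact BTV.pdx_eq_fderiv hf p.1 p.2
    rw [h2, key]
  have e2 : pdx (pdt f) x t = fderiv ℝ (fderiv ℝ (uncurry f)) (x, t) (1, 0) (0, 1) := by
    rw [BTV.pdx_eq_fderiv (BTV.contDiff_pdt hf) x t]
    have h2 : uncurry (pdt f) = fun p => fderiv ℝ (uncurry f) p (0, 1) := by
      funext p; exact BTV.pdt_eq_fderiv hf p.1 p.2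
    rw [h2, key]
  rw [e1, e2, hsymm]

lemma BTV.deriv_zero_of_pos (g : ℝ → ℝ) {t : ℝ} (ht : 0 < t) (hg : ∀ s > (0:ℝ), g s = 0) :
    deriv g t = 0 := by
  have h : g =ᶠ[nhds t] (fun _ => (0:ℝ)) := by
    filter_upwards [eventually_gt_nhds ht] with s hs
    exact hg s hs
  rw [h.deriv_eq, deriv_const]

lemma BTV.hasDerivAt_intInt {G : ℝ → ℝ → ℝ} (hG : ContDiff ℝ (⊤ : ℕ∞) (uncurry G)) (L t : ℝ) :
    HasDerivAt (fun s => ∫ x in (0:ℝ)..L, G x s) (∫ x in (0:ℝ)..L, pdt G x t) t := by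
  have hcont : Continuous (uncurry (pdt G)) := (BTV.contDiff_pdt hG).continuous
  obtain ⟨C, hC⟩ := (isCompact_uIcc.prod
      (isCompact_Icc (a := t - 1) (b := t + 1))).exists_bound_of_continuousOn
    hcont.continuousOn
  have key := intervalIntegral.hasDerivAt_integral_of_dominated_loc_of_deriv_le
    (F := fun s x => G x s) (F' := fun s x => pdt G x s) (x₀ := t)
    (a := 0) (b := L) (μ := volume) (bound := fun _ => C) (Metric.ball_mem_nhds t one_pos)
    (Filter.Eventually.of_forall fun s =>
      ((hG.continuous.comp (continuous_id.prodMk continuous_const)).aestronglyMeasurable))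
    ((hG.continuous.comp (continuous_id.prodMk continuous_const)).intervalIntegrable 0 L)
    ((hcont.comp (continuous_id.prodMk continuous_const)).aestronglyMeasurable)
    ?_ intervalIntegrable_const ?_
  · exact key.2
  · refine Filter.Eventually.of_forall fun x hx s hs => ?_
    have hx' : x ∈ uIcc (0:ℝ) L := uIoc_subset_uIcc hx
    have hs' : s ∈ Icc (t - 1) (t + 1) := by
      rw [Real.ball_eq_Ioo] at hs
      exact ⟨hs.1.le, hs.2.le⟩
    exact hC (x, s) (mk_mem_prod hx' hs')
  · exact Filter.Eventually.of_forall fun x _ s _ => BTV.hasDerivAt_pdt hG x s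

/-- time derivative of the energy density. -/
noncomputable def GtV (ρ1 ρ2 κ α τ0 r d : ℝ) (φ ψ θ P : ℝ → ℝ → ℝ) (x t : ℝ) : ℝ :=
  ρ1 * (2 * pdt φ x t * pdt (pdt φ) x t)
  + α * (2 * pdx ψ x t * pdx (pdt ψ) x t)
  + κ * (2 * (pdx φ x t + ψ x t) * (pdx (pdt φ) x t + pdt ψ x t))
  + ρ1 * ρ2 / κ * (2 * pdt (pdt φ) x t * pdt (pdt (pdt φ)) x t)
  + ρ2 * (2 * pdx (pdt φ) x t * pdx (pdt (pdt φ)) x t)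
  + τ0 * (2 * θ x t * pdt θ x t)
  + r * (2 * P x t * pdt P x t)
  + 2 * d * (pdt θ x t * P x t + θ x t * pdt P x t)

/-- boundary flux function. -/
noncomputable def BV (κ α ρ2 ξ1 ξ2 δ h : ℝ) (φ ψ θ P : ℝ → ℝ → ℝ) (x t : ℝ) : ℝ :=
  κ * pdt φ x t * (pdx φ x t + ψ x t) + α * pdt ψ x t * pdx ψ x t
  + ρ2 * pdt (pdt φ) x t * pdt ψ x t + ξ1 * θ x t * pdt ψ x t + ξ2 * P x t * pdt ψ x t
  + ρ2 * pdt (pdt φ) x t * pdx (pdt φ) x t + δ * θ x t * pdx θ x t + h * P x t * pdx P x t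

/-- spatial derivative of the boundary flux function. -/
noncomputable def BxV (κ α ρ2 ξ1 ξ2 δ h : ℝ) (φ ψ θ P : ℝ → ℝ → ℝ) (x t : ℝ) : ℝ :=
  κ * (pdx (pdt φ) x t * (pdx φ x t + ψ x t) + pdt φ x t * (pdx (pdx φ) x t + pdx ψ x t))
  + α * (pdx (pdt ψ) x t * pdx ψ x t + pdt ψ x t * pdx (pdx ψ) x t)
  + ρ2 * (pdx (pdt (pdt φ)) x t * pdt ψ x t + pdt (pdt φ) x t * pdx (pdt ψ) x t)
  + ξ1 * (pdx θ x t * pdt ψ x t + θ x t * pdx (pdt ψ) x t)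
  + ξ2 * (pdx P x t * pdt ψ x t + P x t * pdx (pdt ψ) x t)
  + ρ2 * (pdx (pdt (pdt φ)) x t * pdx (pdt φ) x t
      + pdt (pdt φ) x t * pdx (pdx (pdt φ)) x t)
  + δ * ((pdx θ x t) ^ 2 + θ x t * pdx (pdx θ) x t)
  + h * ((pdx P x t) ^ 2 + P x t * pdx (pdx P) x t)

lemma BTV.hasDerivAt_G {φ ψ θ P : ℝ → ℝ → ℝ} (ρ1 ρ2 κ α τ0 r d : ℝ)
    (hφ : ContDiff ℝ (⊤ : ℕ∞) (uncurry φ)) (hψ : ContDiff ℝ (⊤ : ℕ∞) (uncurry ψ))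
    (hθ : ContDiff ℝ (⊤ : ℕ∞) (uncurry θ)) (hP : ContDiff ℝ (⊤ : ℕ∞) (uncurry P)) (x t : ℝ) :
    HasDerivAt (fun s => ρ1 * (pdt φ x s) ^ 2 + α * (pdx ψ x s) ^ 2
        + κ * (pdx φ x s + ψ x s) ^ 2 + (ρ1 * ρ2 / κ) * (pdt (pdt φ) x s) ^ 2
        + ρ2 * (pdx (pdt φ) x s) ^ 2 + τ0 * (θ x s) ^ 2 + r * (P x s) ^ 2
        + 2 * d * (θ x s) * (P x s))
      (GtV ρ1 ρ2 κ α τ0 r d φ ψ θ P x t) t := by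
  have H := (((((((((BTV.hasDerivAt_pdt (BTV.contDiff_pdt hφ) x t).pow 2).const_mul ρ1).add
    (((BTV.hasDerivAt_pdt (BTV.contDiff_pdx hψ) x t).pow 2).const_mul α)).add
    ((((BTV.hasDerivAt_pdt (BTV.contDiff_pdx hφ) x t).add
        (BTV.hasDerivAt_pdt hψ x t)).pow 2).const_mul κ)).add
    (((BTV.hasDerivAt_pdt (BTV.contDiff_pdt (BTV.contDiff_pdt hφ)) x t).pow 2).const_mul
      (ρ1 * ρ2 / κ))).add
    (((BTV.hasDerivAt_pdt (BTV.contDiff_pdx (BTV.contDiff_pdt hφ)) x t).pow 2).const_mul ρ2)).add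
    (((BTV.hasDerivAt_pdt hθ x t).pow 2).const_mul τ0)).add
    (((BTV.hasDerivAt_pdt hP x t).pow 2).const_mul r)).add
    (((BTV.hasDerivAt_pdt hθ x t).const_mul (2 * d)).mul (BTV.hasDerivAt_pdt hP x t))
  refine H.congr_deriv ?_
  rw [GtV, ← BTV.pdt_pdx_comm (BTV.contDiff_pdt hφ), ← BTV.pdt_pdx_comm hψ,
    ← BTV.pdt_pdx_comm hφ]
  push_cast
  simp only [Pi.add_apply]
  ring

lemma BTV.hasDerivAt_B {φ ψ θ P : ℝ → ℝ → ℝ} (κ α ρ2 ξ1 ξ2 δ h : ℝ)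
    (hφ : ContDiff ℝ (⊤ : ℕ∞) (uncurry φ)) (hψ : ContDiff ℝ (⊤ : ℕ∞) (uncurry ψ))
    (hθ : ContDiff ℝ (⊤ : ℕ∞) (uncurry θ)) (hP : ContDiff ℝ (⊤ : ℕ∞) (uncurry P)) (t x : ℝ) :
    HasDerivAt (fun y => BV κ α ρ2 ξ1 ξ2 δ h φ ψ θ P y t)
      (BxV κ α ρ2 ξ1 ξ2 δ h φ ψ θ P x t) x := by
  have h1 := ((BTV.hasDerivAt_pdx (BTV.contDiff_pdt hφ) x t).const_mul κ).mul
    ((BTV.hasDerivAt_pdx (BTV.contDiff_pdx hφ) x t).add (BTV.hasDerivAt_pdx hψ x t))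
  have h2 := ((BTV.hasDerivAt_pdx (BTV.contDiff_pdt hψ) x t).const_mul α).mul
    (BTV.hasDerivAt_pdx (BTV.contDiff_pdx hψ) x t)
  have h3 := ((BTV.hasDerivAt_pdx (BTV.contDiff_pdt (BTV.contDiff_pdt hφ)) x t).const_mul ρ2).mul
    (BTV.hasDerivAt_pdx (BTV.contDiff_pdt hψ) x t)
  have h4 := ((BTV.hasDerivAt_pdx hθ x t).const_mul ξ1).mul
    (BTV.hasDerivAt_pdx (BTV.contDiff_pdt hψ) x t)
  have h5 := ((BTV.hasDerivAt_pdx hP x t).const_mul ξ2).mul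
    (BTV.hasDerivAt_pdx (BTV.contDiff_pdt hψ) x t)
  have h6 := ((BTV.hasDerivAt_pdx (BTV.contDiff_pdt (BTV.contDiff_pdt hφ)) x t).const_mul ρ2).mul
    (BTV.hasDerivAt_pdx (BTV.contDiff_pdx (BTV.contDiff_pdt hφ)) x t)
  have h7 := ((BTV.hasDerivAt_pdx hθ x t).const_mul δ).mul
    (BTV.hasDerivAt_pdx (BTV.contDiff_pdx hθ) x t)
  have h8 := ((BTV.hasDerivAt_pdx hP x t).const_mul h).mul
    (BTV.hasDerivAt_pdx (BTV.contDiff_pdx hP) x t)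
  have H := ((((((h1.add h2).add h3).add h4).add h5).add h6).add h7).add h8
  have hfun : (fun y => BV κ α ρ2 ξ1 ξ2 δ h φ ψ θ P y t)
      = fun y => κ * pdt φ y t * (pdx φ y t + ψ y t) + α * pdt ψ y t * pdx ψ y t
        + ρ2 * pdt (pdt φ) y t * pdt ψ y t + ξ1 * θ y t * pdt ψ y t
        + ξ2 * P y t * pdt ψ y t + ρ2 * pdt (pdt φ) y t * pdx (pdt φ) y t
        + δ * θ y t * pdx θ y t + h * P y t * pdx P y t := rfl
  rw [hfun]
  refine H.congr_deriv ?_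
  rw [BxV]
  simp only [Pi.add_apply]
  ring

lemma BTV.pointwise {ρ1 ρ2 κ α ξ1 ξ2 τ0 δ r h μ d : ℝ} (hκ : κ ≠ 0)
    {φ ψ θ P : ℝ → ℝ → ℝ}
    (hφ : ContDiff ℝ (⊤ : ℕ∞) (uncurry φ)) (hψ : ContDiff ℝ (⊤ : ℕ∞) (uncurry ψ))
    {x t : ℝ} (ht : 0 < t)
    (he1 : ∀ s > (0:ℝ), ρ1 * pdt (pdt φ) x s
      - κ * pdx (fun y s' => pdx φ y s' + ψ y s') x s + μ * pdt φ x s = 0)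
    (e2 : -(ρ2 * pdx (pdt (pdt φ)) x t) - α * pdx (pdx ψ) x t + κ * (pdx φ x t + ψ x t)
        - ξ1 * pdx θ x t - ξ2 * pdx P x t = 0)
    (e3 : τ0 * pdt θ x t + d * pdt P x t - δ * pdx (pdx θ) x t - ξ1 * pdx (pdt ψ) x t = 0)
    (e4 : d * pdt θ x t + r * pdt P x t - h * pdx (pdx P) x t - ξ2 * pdx (pdt ψ) x t = 0) :
    GtV ρ1 ρ2 κ α τ0 r d φ ψ θ P x t
      = -(2*δ) * (pdx θ x t)^2 + -(2*h) * (pdx P x t)^2 + -(2*μ) * (pdt φ x t)^2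
        + -(2*μ*ρ2/κ) * (pdt (pdt φ) x t)^2 + 2 * BxV κ α ρ2 ξ1 ξ2 δ h φ ψ θ P x t := by
  have hw : ContDiff ℝ (⊤ : ℕ∞) (uncurry fun y s => pdx φ y s + ψ y s) := by
    show ContDiff ℝ (⊤ : ℕ∞) (fun p : ℝ × ℝ => pdx φ p.1 p.2 + ψ p.1 p.2)
    exact (BTV.contDiff_pdx hφ).add hψ
  have hwx : pdx (fun y s => pdx φ y s + ψ y s) x t = pdx (pdx φ) x t + pdx ψ x t :=
    ((BTV.hasDerivAt_pdx (BTV.contDiff_pdx hφ) x t).add (BTV.hasDerivAt_pdx hψ x t)).deriv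
  have e1 : ρ1 * pdt (pdt φ) x t - κ * (pdx (pdx φ) x t + pdx ψ x t) + μ * pdt φ x t = 0 := by
    have := he1 t ht; rwa [hwx] at this
  have hq : HasDerivAt (fun s => ρ1 * pdt (pdt φ) x s
        - κ * pdx (fun y s' => pdx φ y s' + ψ y s') x s + μ * pdt φ x s)
      (ρ1 * pdt (pdt (pdt φ)) x t - κ * pdt (pdx (fun y s' => pdx φ y s' + ψ y s')) x t
        + μ * pdt (pdt φ) x t) t :=
    (((BTV.hasDerivAt_pdt (BTV.contDiff_pdt (BTV.contDiff_pdt hφ)) x t).const_mul ρ1).sub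
      ((BTV.hasDerivAt_pdt (BTV.contDiff_pdx hw) x t).const_mul κ)).add
      ((BTV.hasDerivAt_pdt (BTV.contDiff_pdt hφ) x t).const_mul μ)
  have e1t0 : ρ1 * pdt (pdt (pdt φ)) x t
      - κ * pdt (pdx (fun y s' => pdx φ y s' + ψ y s')) x t + μ * pdt (pdt φ) x t = 0 := by
    rw [← hq.deriv]; exact BTV.deriv_zero_of_pos _ ht he1
  have hmix : pdt (pdx (fun y s' => pdx φ y s' + ψ y s')) x t
      = pdx (pdx (pdt φ)) x t + pdx (pdt ψ) x t := by
    rw [BTV.pdt_pdx_comm hw]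
    have h2 : pdt (fun y s' => pdx φ y s' + ψ y s')
        = fun y s' => pdx (pdt φ) y s' + pdt ψ y s' := by
      funext y s
      have h3 := ((BTV.hasDerivAt_pdt (BTV.contDiff_pdx hφ) y s).add
        (BTV.hasDerivAt_pdt hψ y s)).deriv
      rw [BTV.pdt_pdx_comm hφ] at h3
      exact h3
    rw [h2]
    exact ((BTV.hasDerivAt_pdx (BTV.contDiff_pdx (BTV.contDiff_pdt hφ)) x t).add
      (BTV.hasDerivAt_pdx (BTV.contDiff_pdt hψ) x t)).deriv
  have e1t : ρ1 * pdt (pdt (pdt φ)) x t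
      - κ * (pdx (pdx (pdt φ)) x t + pdx (pdt ψ) x t) + μ * pdt (pdt φ) x t = 0 := by
    rw [← hmix]; exact e1t0
  have hinv : κ⁻¹ * κ = 1 := inv_mul_cancel₀ hκ
  rw [GtV, BxV]
  linear_combination (2 * pdt φ x t) * e1 + (2 * pdt ψ x t) * e2
    + (2 * (ρ2/κ) * pdt (pdt φ) x t) * e1t + (2 * θ x t) * e3 + (2 * P x t) * e4
    + (2 * ρ2 * pdt (pdt φ) x t * (pdx (pdx (pdt φ)) x t + pdx (pdt ψ) x t)) * hinv

end BTVhelpers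

/-- Energy dissipation identity for the vertically-damped system; in particular
the energy is nonincreasing. -/
theorem energy_dissipation_vertical (L ρ1 ρ2 κ α ξ1 ξ2 τ0 δ r h μ d : ℝ)
    (hL : 0 < L) (hρ1 : 0 < ρ1) (hρ2 : 0 < ρ2) (hκ : 0 < κ) (hα : 0 < α)
    (hξ1 : 0 < ξ1) (hξ2 : 0 < ξ2) (hτ0 : 0 < τ0) (hδ : 0 < δ) (hr : 0 < r) (hh : 0 < h)
    (hμ : 0 < μ) (hcrd : τ0 * r - d ^ 2 > 0)
    (φ ψ θ P : ℝ → ℝ → ℝ)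
    (hsol : IsSolutionV L ρ1 ρ2 κ α ξ1 ξ2 τ0 δ r h μ d φ ψ θ P) :
    (∀ t > (0:ℝ),
      deriv (energyV L ρ1 ρ2 κ α τ0 r d φ ψ θ P) t =
          -(δ * ∫ x in (0:ℝ)..L, (pdx θ x t) ^ 2)
            - h * (∫ x in (0:ℝ)..L, (pdx P x t) ^ 2)
            - μ * (∫ x in (0:ℝ)..L, (pdt φ x t) ^ 2)
            - (μ * ρ2 / κ) * ∫ x in (0:ℝ)..L, (pdt (pdt φ) x t) ^ 2 ∧
        deriv (energyV L ρ1 ρ2 κ α τ0 r d φ ψ θ P) t ≤ 0) ∧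
    (∀ s t : ℝ, 0 ≤ s → s ≤ t →
      energyV L ρ1 ρ2 κ α τ0 r d φ ψ θ P t ≤ energyV L ρ1 ρ2 κ α τ0 r d φ ψ θ P s) := by
  obtain ⟨hφ, hψ, hθ, hP, hpde, hbc⟩ := hsol
  have hGsm : ContDiff ℝ (⊤ : ℕ∞) (Function.uncurry fun x t =>
      (ρ1 * (pdt φ x t) ^ 2 + α * (pdx ψ x t) ^ 2 + κ * (pdx φ x t + ψ x t) ^ 2
        + (ρ1 * ρ2 / κ) * (pdt (pdt φ) x t) ^ 2 + ρ2 * (pdx (pdt φ) x t) ^ 2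
        + τ0 * (θ x t) ^ 2 + r * (P x t) ^ 2 + 2 * d * (θ x t) * (P x t))) := by
    show ContDiff ℝ (⊤ : ℕ∞) (fun p : ℝ × ℝ =>
      ρ1 * (pdt φ p.1 p.2) ^ 2 + α * (pdx ψ p.1 p.2) ^ 2
        + κ * (pdx φ p.1 p.2 + ψ p.1 p.2) ^ 2 + (ρ1 * ρ2 / κ) * (pdt (pdt φ) p.1 p.2) ^ 2
        + ρ2 * (pdx (pdt φ) p.1 p.2) ^ 2 + τ0 * (θ p.1 p.2) ^ 2 + r * (P p.1 p.2) ^ 2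
        + 2 * d * (θ p.1 p.2) * (P p.1 p.2))
    exact (((((((contDiff_const.mul ((BTV.contDiff_pdt hφ).pow 2)).add
      (contDiff_const.mul ((BTV.contDiff_pdx hψ).pow 2))).add
      (contDiff_const.mul (((BTV.contDiff_pdx hφ).add hψ).pow 2))).add
      (contDiff_const.mul ((BTV.contDiff_pdt (BTV.contDiff_pdt hφ)).pow 2))).add
      (contDiff_const.mul ((BTV.contDiff_pdx (BTV.contDiff_pdt hφ)).pow 2))).add
      (contDiff_const.mul (hθ.pow 2))).add
      (contDiff_const.mul (hP.pow 2))).add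
      ((contDiff_const.mul hθ).mul hP)
  have hderiv : ∀ t : ℝ, HasDerivAt (energyV L ρ1 ρ2 κ α τ0 r d φ ψ θ P)
      ((1/2) * ∫ x in (0:ℝ)..L, GtV ρ1 ρ2 κ α τ0 r d φ ψ θ P x t) t := by
    intro t
    have h0 := BTV.hasDerivAt_intInt hGsm L t
    have hcg : (∫ x in (0:ℝ)..L, pdt (fun x t =>
        (ρ1 * (pdt φ x t) ^ 2 + α * (pdx ψ x t) ^ 2 + κ * (pdx φ x t + ψ x t) ^ 2
          + (ρ1 * ρ2 / κ) * (pdt (pdt φ) x t) ^ 2 + ρ2 * (pdx (pdt φ) x t) ^ 2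
          + τ0 * (θ x t) ^ 2 + r * (P x t) ^ 2 + 2 * d * (θ x t) * (P x t))) x t)
        = ∫ x in (0:ℝ)..L, GtV ρ1 ρ2 κ α τ0 r d φ ψ θ P x t :=
      intervalIntegral.integral_congr fun x _ =>
        (BTV.hasDerivAt_G ρ1 ρ2 κ α τ0 r d hφ hψ hθ hP x t).deriv
    rw [hcg] at h0
    exact h0.const_mul (1/2)
  have keyEq : ∀ t > (0:ℝ),
      deriv (energyV L ρ1 ρ2 κ α τ0 r d φ ψ θ P) t =
        -(δ * ∫ x in (0:ℝ)..L, (pdx θ x t) ^ 2)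
          - h * (∫ x in (0:ℝ)..L, (pdx P x t) ^ 2)
          - μ * (∫ x in (0:ℝ)..L, (pdt φ x t) ^ 2)
          - (μ * ρ2 / κ) * ∫ x in (0:ℝ)..L, (pdt (pdt φ) x t) ^ 2 := by
    intro t ht
    -- continuity of all the slices appearing below
    have cθ : Continuous fun x => θ x t := BTV.cont_slice hθ t
    have cP : Continuous fun x => P x t := BTV.cont_slice hP t
    have cψ : Continuous fun x => ψ x t := BTV.cont_slice hψ t
    have cθx : Continuous fun x => pdx θ x t := BTV.cont_slice (BTV.contDiff_pdx hθ) t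
    have cPx : Continuous fun x => pdx P x t := BTV.cont_slice (BTV.contDiff_pdx hP) t
    have cφt : Continuous fun x => pdt φ x t := BTV.cont_slice (BTV.contDiff_pdt hφ) t
    have cφtt : Continuous fun x => pdt (pdt φ) x t :=
      BTV.cont_slice (BTV.contDiff_pdt (BTV.contDiff_pdt hφ)) t
    have cφx : Continuous fun x => pdx φ x t := BTV.cont_slice (BTV.contDiff_pdx hφ) t
    have cφxx : Continuous fun x => pdx (pdx φ) x t :=
      BTV.cont_slice (BTV.contDiff_pdx (BTV.contDiff_pdx hφ)) t
    have cψx : Continuous fun x => pdx ψ x t := BTV.cont_slice (BTV.contDiff_pdx hψ) t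
    have cψxx : Continuous fun x => pdx (pdx ψ) x t :=
      BTV.cont_slice (BTV.contDiff_pdx (BTV.contDiff_pdx hψ)) t
    have cψt : Continuous fun x => pdt ψ x t := BTV.cont_slice (BTV.contDiff_pdt hψ) t
    have cψtx : Continuous fun x => pdx (pdt ψ) x t :=
      BTV.cont_slice (BTV.contDiff_pdx (BTV.contDiff_pdt hψ)) t
    have cφtx : Continuous fun x => pdx (pdt φ) x t :=
      BTV.cont_slice (BTV.contDiff_pdx (BTV.contDiff_pdt hφ)) t
    have cφttx : Continuous fun x => pdx (pdt (pdt φ)) x t :=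
      BTV.cont_slice (BTV.contDiff_pdx (BTV.contDiff_pdt (BTV.contDiff_pdt hφ))) t
    have cφtxx : Continuous fun x => pdx (pdx (pdt φ)) x t :=
      BTV.cont_slice (BTV.contDiff_pdx (BTV.contDiff_pdx (BTV.contDiff_pdt hφ))) t
    have cθxx : Continuous fun x => pdx (pdx θ) x t :=
      BTV.cont_slice (BTV.contDiff_pdx (BTV.contDiff_pdx hθ)) t
    have cPxx : Continuous fun x => pdx (pdx P) x t :=
      BTV.cont_slice (BTV.contDiff_pdx (BTV.contDiff_pdx hP)) t
    have cBx : Continuous fun x => BxV κ α ρ2 ξ1 ξ2 δ h φ ψ θ P x t := by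
      simp only [BxV]; fun_prop
    -- pointwise identity on the open interval
    have hptw : ∀ x ∈ Set.Ioo (0:ℝ) L,
        GtV ρ1 ρ2 κ α τ0 r d φ ψ θ P x t
          = -(2*δ) * (pdx θ x t)^2 + -(2*h) * (pdx P x t)^2 + -(2*μ) * (pdt φ x t)^2
            + -(2*μ*ρ2/κ) * (pdt (pdt φ) x t)^2
            + 2 * BxV κ α ρ2 ξ1 ξ2 δ h φ ψ θ P x t := by
      intro x hx
      exact BTV.pointwise hκ.ne' hφ hψ ht
        (fun s hs => (hpde x hx s hs).1) ((hpde x hx t ht).2.1)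
        ((hpde x hx t ht).2.2.1) ((hpde x hx t ht).2.2.2)
    have hcongr : (∫ x in (0:ℝ)..L, GtV ρ1 ρ2 κ α τ0 r d φ ψ θ P x t)
        = ∫ x in (0:ℝ)..L,
            (-(2*δ) * (pdx θ x t)^2 + -(2*h) * (pdx P x t)^2 + -(2*μ) * (pdt φ x t)^2
              + -(2*μ*ρ2/κ) * (pdt (pdt φ) x t)^2
              + 2 * BxV κ α ρ2 ξ1 ξ2 δ h φ ψ θ P x t) := by
      apply intervalIntegral.integral_congr_ae
      have hne : ∀ᵐ x : ℝ, x ≠ L := by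
        rw [MeasureTheory.ae_iff]
        simpa using measure_singleton (α := ℝ) L
      filter_upwards [hne] with x hxL hxI
      have hx' : x ∈ Set.Ioo (0:ℝ) L := by
        rw [Set.uIoc_of_le hL.le] at hxI
        exact ⟨hxI.1, lt_of_le_of_ne hxI.2 hxL⟩
      exact hptw x hx'
    -- boundary values of the flux vanish
    have bφt0 : pdt φ 0 t = 0 :=
      BTV.deriv_zero_of_pos (fun s => φ 0 s) ht (fun s hs => (hbc s hs.le).1)
    have bφtL : pdt φ L t = 0 :=
      BTV.deriv_zero_of_pos (fun s => φ L s) ht (fun s hs => (hbc s hs.le).2.1)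
    have bψt0 : pdt ψ 0 t = 0 :=
      BTV.deriv_zero_of_pos (fun s => ψ 0 s) ht (fun s hs => (hbc s hs.le).2.2.1)
    have bψtL : pdt ψ L t = 0 :=
      BTV.deriv_zero_of_pos (fun s => ψ L s) ht (fun s hs => (hbc s hs.le).2.2.2.1)
    have bφtt0 : pdt (pdt φ) 0 t = 0 :=
      BTV.deriv_zero_of_pos (fun s => pdt φ 0 s) ht (fun s hs =>
        BTV.deriv_zero_of_pos (fun τ => φ 0 τ) hs (fun τ hτ => (hbc τ hτ.le).1))
    have bφttL : pdt (pdt φ) L t = 0 :=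
      BTV.deriv_zero_of_pos (fun s => pdt φ L s) ht (fun s hs =>
        BTV.deriv_zero_of_pos (fun τ => φ L τ) hs (fun τ hτ => (hbc τ hτ.le).2.1))
    have bθ0 : θ 0 t = 0 := (hbc t ht.le).2.2.2.2.1
    have bθL : θ L t = 0 := (hbc t ht.le).2.2.2.2.2.1
    have bP0 : P 0 t = 0 := (hbc t ht.le).2.2.2.2.2.2.1
    have bPL : P L t = 0 := (hbc t ht.le).2.2.2.2.2.2.2
    have hBint : (∫ x in (0:ℝ)..L, BxV κ α ρ2 ξ1 ξ2 δ h φ ψ θ P x t) = 0 := by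
      rw [intervalIntegral.integral_eq_sub_of_hasDerivAt
        (fun x _ => BTV.hasDerivAt_B κ α ρ2 ξ1 ξ2 δ h hφ hψ hθ hP t x)
        (cBx.intervalIntegrable 0 L)]
      have hb0 : BV κ α ρ2 ξ1 ξ2 δ h φ ψ θ P 0 t = 0 := by
        simp [BV, bφt0, bψt0, bφtt0, bθ0, bP0]
      have hbL : BV κ α ρ2 ξ1 ξ2 δ h φ ψ θ P L t = 0 := by
        simp [BV, bφtL, bψtL, bφttL, bθL, bPL]
      rw [hb0, hbL, sub_zero]
    -- integrability of the pieces
    have i1 : IntervalIntegrable (fun x => -(2*δ) * (pdx θ x t)^2) MeasureTheory.volume 0 L :=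
      (continuous_const.mul (cθx.pow 2)).intervalIntegrable 0 L
    have i2 : IntervalIntegrable (fun x => -(2*h) * (pdx P x t)^2) MeasureTheory.volume 0 L :=
      (continuous_const.mul (cPx.pow 2)).intervalIntegrable 0 L
    have i3 : IntervalIntegrable (fun x => -(2*μ) * (pdt φ x t)^2) MeasureTheory.volume 0 L :=
      (continuous_const.mul (cφt.pow 2)).intervalIntegrable 0 L
    have i4 : IntervalIntegrable (fun x => -(2*μ*ρ2/κ) * (pdt (pdt φ) x t)^2)
        MeasureTheory.volume 0 L :=
      (continuous_const.mul (cφtt.pow 2)).intervalIntegrable 0 L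
    have i5 : IntervalIntegrable (fun x => 2 * BxV κ α ρ2 ξ1 ξ2 δ h φ ψ θ P x t)
        MeasureTheory.volume 0 L :=
      (continuous_const.mul cBx).intervalIntegrable 0 L
    rw [(hderiv t).deriv, hcongr,
      intervalIntegral.integral_add (((i1.add i2).add i3).add i4) i5,
      intervalIntegral.integral_add ((i1.add i2).add i3) i4,
      intervalIntegral.integral_add (i1.add i2) i3,
      intervalIntegral.integral_add i1 i2,
      intervalIntegral.integral_const_mul, intervalIntegral.integral_const_mul,
      intervalIntegral.integral_const_mul, intervalIntegral.integral_const_mul,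
      intervalIntegral.integral_const_mul, hBint]
    ring
  have keyLe : ∀ t > (0:ℝ), deriv (energyV L ρ1 ρ2 κ α τ0 r d φ ψ θ P) t ≤ 0 := by
    intro t ht
    rw [keyEq t ht]
    have n1 : 0 ≤ ∫ x in (0:ℝ)..L, (pdx θ x t) ^ 2 :=
      intervalIntegral.integral_nonneg hL.le (fun u _ => sq_nonneg _)
    have n2 : 0 ≤ ∫ x in (0:ℝ)..L, (pdx P x t) ^ 2 :=
      intervalIntegral.integral_nonneg hL.le (fun u _ => sq_nonneg _)
    have n3 : 0 ≤ ∫ x in (0:ℝ)..L, (pdt φ x t) ^ 2 :=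
      intervalIntegral.integral_nonneg hL.le (fun u _ => sq_nonneg _)
    have n4 : 0 ≤ ∫ x in (0:ℝ)..L, (pdt (pdt φ) x t) ^ 2 :=
      intervalIntegral.integral_nonneg hL.le (fun u _ => sq_nonneg _)
    have m1 : 0 ≤ δ * ∫ x in (0:ℝ)..L, (pdx θ x t) ^ 2 := mul_nonneg hδ.le n1
    have m2 : 0 ≤ h * ∫ x in (0:ℝ)..L, (pdx P x t) ^ 2 := mul_nonneg hh.le n2
    have m3 : 0 ≤ μ * ∫ x in (0:ℝ)..L, (pdt φ x t) ^ 2 := mul_nonneg hμ.le n3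
    have m4 : 0 ≤ (μ * ρ2 / κ) * ∫ x in (0:ℝ)..L, (pdt (pdt φ) x t) ^ 2 :=
      mul_nonneg (by positivity) n4
    linarith
  refine ⟨fun t ht => ⟨keyEq t ht, keyLe t ht⟩, fun s t hs hst => ?_⟩
  rcases eq_or_lt_of_le hst with rfl | hlt
  · exact le_refl _
  · have hcont : Continuous (energyV L ρ1 ρ2 κ α τ0 r d φ ψ θ P) :=
      continuous_iff_continuousAt.mpr fun u => (hderiv u).continuousAt
    have hanti := antitoneOn_of_deriv_nonpos (convex_Icc s t) hcont.continuousOn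
      (fun x hx => (hderiv x).differentiableAt.differentiableWithinAt)
      (fun x hx => by
        rw [interior_Icc] at hx
        exact keyLe x (lt_of_le_of_lt hs hx.1))
    exact hanti (Set.left_mem_Icc.mpr hst) (Set.right_mem_Icc.mpr hst) hst
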